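/- Let 𝒟 be a pseudo-absolute value sequence and ψ : ℕ → ℝ a non-negative decreasing function. Then ∑_{n=1}^∞ λ(A_n) = ∞ if and only if ∑_{n=1}^∞ ℳ(n)·ψ(n) = ∞, where A_n = {α ∈ ℝ/ℤ : ‖nα‖ ≤ ψ(n)/|n|_𝒟} and λ is Lebesgue (Haar) probability measure on ℝ/ℤ. -/

import Mathlib

open MeasureTheory

/-- `Mfun nk N = max {k : nk k ≤ N}`. -/
noncomputable def Mfun (nk : ℕ → ℕ) (N : ℕ) : ℕ := sSup {k : ℕ | nk k ≤ N}

/-- `dabsInv nk n` is the largest element of the sequence `nk` dividing `n`, i.e. `1/|n|_𝒟`. -/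
noncomputable def dabsInv (nk : ℕ → ℕ) (n : ℕ) : ℕ := sSup {d : ℕ | ∃ k, d = nk k ∧ nk k ∣ n}

/-!
Write `D(n) = 1/|n|_𝒟` and `M(n) = ℳ(n)`. Since `λ(A_n) = min(1, 2ψ(n)D(n))` and, for non-negative
`x_n`, the series `∑ min(1, x_n)` and `∑ x_n` converge together, it suffices to compare
`∑ ψ(n)D(n)` with `∑ M(n)ψ(n)`.

The terms of `𝒟` dividing `n` are `n_0, …, n_κ` with `n_κ = D(n)`, and `n_{k+1} ≥ 2n_k`, so
`σ(n) = ∑_{n_k ∣ n} n_k` (`dvdSum`) lies between `D(n)` and `2D(n)`. Exchanging summations,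
`∑_{n ≤ N} ψ(n)σ(n) = ∑_k n_k ∑_{m ≤ N/n_k} ψ(m n_k)`, and as `ψ` decreases, each inner term
`n_k ∑_m ψ(m n_k)` is at least `∑_{n_k ≤ n ≤ N} ψ(n)` and at most `n_k ψ(n_k)` more. Summing over
`k ≥ 1` recovers `∑_{n ≤ N} M(n)ψ(n)`, up to `∑_k n_k ψ(n_k) ≤ 2 ∑_n ψ(n)`; and `∑_n ψ(n)` is
itself `O(1 + ∑ M(n)ψ(n))` because `M(n) ≥ 1` once `n ≥ n_1`.
-/

open Finset

section Blocks

variable {M : Type*} [AddCommMonoid M]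

theorem sum_Ico_mul_eq_sum_blocks (f : ℕ → M) (q : ℕ) {a b : ℕ} (hab : a ≤ b) :
    ∑ n ∈ Ico (a * q) (b * q), f n = ∑ m ∈ Ico a b, ∑ n ∈ Ico (m * q) (m * q + q), f n := by
  induction b, hab using Nat.le_induction with
  | base => simp
  | succ b hab ih =>
    rw [sum_Ico_succ_top hab, ← ih, ← Nat.succ_mul,
      sum_Ico_consecutive _ (Nat.mul_le_mul_right q hab) (Nat.mul_le_mul_right q b.le_succ)]

theorem sum_Icc_filter_dvd (f : ℕ → M) {q : ℕ} (hq : 0 < q) (N : ℕ) :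
    ∑ n ∈ Icc 1 N with q ∣ n, f n = ∑ m ∈ Icc 1 (N / q), f (m * q) := by
  have himage : {n ∈ Icc 1 N | q ∣ n} = (Icc 1 (N / q)).image (· * q) := by
    ext n
    simp only [mem_filter, mem_Icc, mem_image, Nat.le_div_iff_mul_le hq]
    constructor
    · rintro ⟨⟨hn, hnN⟩, m, rfl⟩
      exact ⟨m, ⟨Nat.pos_of_mul_pos_left hn, by rwa [mul_comm]⟩, mul_comm _ _⟩
    · rintro ⟨m, ⟨hm, hmN⟩, rfl⟩
      exact ⟨⟨Nat.mul_pos hm hq, hmN⟩, dvd_mul_left q m⟩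
  rw [himage, sum_image fun a _ b _ h => Nat.eq_of_mul_eq_mul_right hq h]

theorem sum_Icc_one_eq_sum_range (f : ℕ → M) (N : ℕ) :
    ∑ n ∈ Icc 1 N, f n = ∑ n ∈ range N, f (n + 1) := by
  rw [range_eq_Ico, sum_Ico_add' f 0 N 1, Ico_add_one_right_eq_Icc]

end Blocks

section Antitone

variable {ψ : ℕ → ℝ}

theorem Antitone.sum_Icc_le_mul_sum_multiples (hψ : Antitone ψ) (hψ0 : ∀ n, 0 ≤ ψ n) {q : ℕ}
    (hq : 0 < q) (N : ℕ) : ∑ n ∈ Icc q N, ψ n ≤ q * ∑ m ∈ Icc 1 (N / q), ψ (m * q) := by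
  have hcover : Icc q N ⊆ Ico (1 * q) ((N / q + 1) * q) := by
    intro n hn
    have := Nat.lt_div_mul_add (a := N) hq
    simp only [mem_Icc, mem_Ico] at hn ⊢
    constructor <;> nlinarith
  calc ∑ n ∈ Icc q N, ψ n ≤ ∑ n ∈ Ico (1 * q) ((N / q + 1) * q), ψ n :=
        sum_le_sum_of_subset_of_nonneg hcover fun n _ _ => hψ0 n
    _ = ∑ m ∈ Ico 1 (N / q + 1), ∑ n ∈ Ico (m * q) (m * q + q), ψ n :=
        sum_Ico_mul_eq_sum_blocks ψ q (Nat.le_add_left 1 _)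
    _ ≤ ∑ m ∈ Ico 1 (N / q + 1), q * ψ (m * q) := by
        gcongr with m
        have := sum_le_card_nsmul (Ico (m * q) (m * q + q)) ψ (ψ (m * q))
          fun n hn => hψ (mem_Ico.1 hn).1
        rwa [Nat.card_Ico, Nat.add_sub_cancel_left, nsmul_eq_mul] at this
    _ = q * ∑ m ∈ Icc 1 (N / q), ψ (m * q) := by rw [mul_sum, Ico_add_one_right_eq_Icc]

theorem Antitone.mul_sum_multiples_le (hψ : Antitone ψ) (hψ0 : ∀ n, 0 ≤ ψ n) (q N : ℕ) :
    q * ∑ m ∈ Icc 1 (N / q), ψ (m * q) ≤ q * ψ q + ∑ n ∈ Icc q N, ψ n := by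
  have hsplit : ∑ m ∈ Icc 1 (N / q), ψ (m * q) ≤ ψ q + ∑ m ∈ Ico 1 (N / q), ψ (m * q + q) := by
    rcases Nat.eq_zero_or_pos (N / q) with hM | hM
    · simp [hM, hψ0 q]
    rw [← Ico_add_one_right_eq_Icc, sum_eq_sum_Ico_succ_bot (by omega), one_mul]
    simp only [← add_one_mul]
    rw [sum_Ico_add' (fun m => ψ (m * q))]
  have hblocks : ∑ m ∈ Ico 1 (N / q), q * ψ (m * q + q) ≤ ∑ n ∈ Icc q N, ψ n := by
    calc ∑ m ∈ Ico 1 (N / q), q * ψ (m * q + q)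
        ≤ ∑ m ∈ Ico 1 (N / q), ∑ n ∈ Ico (m * q) (m * q + q), ψ n := by
          gcongr with m
          have := card_nsmul_le_sum (Ico (m * q) (m * q + q)) ψ (ψ (m * q + q))
            fun n hn => hψ (mem_Ico.1 hn).2.le
          rwa [Nat.card_Ico, Nat.add_sub_cancel_left, nsmul_eq_mul] at this
      _ = ∑ n ∈ Ico (1 * q) (N / q * q), ψ n := by
          rcases Nat.eq_zero_or_pos (N / q) with hM | hM
          · simp [hM]
          exact (sum_Ico_mul_eq_sum_blocks ψ q hM).symm
      _ ≤ ∑ n ∈ Icc q N, ψ n := by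
          refine sum_le_sum_of_subset_of_nonneg (fun n hn => ?_) fun n _ _ => hψ0 n
          have := Nat.div_mul_le_self N q
          simp only [mem_Icc, mem_Ico] at hn ⊢
          omega
  calc q * ∑ m ∈ Icc 1 (N / q), ψ (m * q) ≤ q * (ψ q + ∑ m ∈ Ico 1 (N / q), ψ (m * q + q)) := by
        gcongr
    _ ≤ q * ψ q + ∑ n ∈ Icc q N, ψ n := by rw [mul_add, mul_sum]; linarith

end Antitone

theorem two_mul_le_of_dvd_of_lt {a b : ℕ} (hdvd : a ∣ b) (hlt : a < b) : 2 * a ≤ b := by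
  obtain ⟨c, rfl⟩ := hdvd
  rcases c with _ | _ | c
  · simp at hlt
  · simp at hlt
  · nlinarith

section Doubling

variable {a : ℕ → ℕ} (ha : ∀ k, 2 * a k ≤ a (k + 1))
include ha

theorem sum_range_succ_le_two_mul (κ : ℕ) : ∑ k ∈ range (κ + 1), a k ≤ 2 * a κ := by
  induction κ with
  | zero => simpa using Nat.le_mul_of_pos_left (a 0) two_pos
  | succ κ ih =>
    rw [sum_range_succ]
    linarith [ha κ]

theorem sum_range_mul_le_two_mul_sum_Ioc {ψ : ℕ → ℝ} (hψ : Antitone ψ) (hψ0 : ∀ n, 0 ≤ ψ n)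
    (K : ℕ) : ∑ k ∈ range K, a (k + 1) * ψ (a (k + 1)) ≤ 2 * ∑ n ∈ Ioc (a 0) (a K), ψ n := by
  have hmono : Monotone a := monotone_nat_of_le_succ fun k => by linarith [ha k]
  induction K with
  | zero => simp
  | succ K ih =>
    have hcard : (a (K + 1) : ℝ) ≤ 2 * #(Ioc (a K) (a (K + 1))) := by
      rw [Nat.card_Ioc]
      exact_mod_cast (by have := ha K; omega : a (K + 1) ≤ 2 * (a (K + 1) - a K))
    have hlast := card_nsmul_le_sum (Ioc (a K) (a (K + 1))) ψ (ψ (a (K + 1)))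
      fun n hn => hψ (mem_Ioc.1 hn).2
    rw [nsmul_eq_mul] at hlast
    rw [sum_range_succ, ← sum_Ioc_consecutive _ (hmono K.zero_le) (hmono K.le_succ), mul_add]
    nlinarith [hψ0 (a (K + 1))]

end Doubling

structure IsPseudoAbsValueSeq (nk : ℕ → ℕ) : Prop where
  zero : nk 0 = 1
  strictMono : StrictMono nk
  dvd_succ : ∀ k, nk k ∣ nk (k + 1)

theorem le_Mfun_iff {nk : ℕ → ℕ} (hmono : StrictMono nk) {n : ℕ} (hn : nk 0 ≤ n) {k : ℕ} :
    k ≤ Mfun nk n ↔ nk k ≤ n := by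
  have hbdd : BddAbove {k | nk k ≤ n} := ⟨n, fun k hk => hmono.le_apply.trans hk⟩
  exact ⟨fun hk => (hmono.monotone hk).trans (Nat.sSup_mem ⟨0, hn⟩ hbdd),
    fun hk => le_csSup hbdd hk⟩

theorem bddAbove_setOf_seq_dvd (nk : ℕ → ℕ) {n : ℕ} (hn : n ≠ 0) :
    BddAbove {d | ∃ k, d = nk k ∧ nk k ∣ n} := by
  refine ⟨n, ?_⟩
  rintro _ ⟨k, rfl, hk⟩
  exact Nat.le_of_dvd (Nat.pos_of_ne_zero hn) hk

theorem le_dabsInv {nk : ℕ → ℕ} {n k : ℕ} (hn : n ≠ 0) (hk : nk k ∣ n) : nk k ≤ dabsInv nk n :=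
  le_csSup (bddAbove_setOf_seq_dvd nk hn) ⟨k, rfl, hk⟩

theorem exists_dabsInv_eq {nk : ℕ → ℕ} (h0 : nk 0 = 1) {n : ℕ} (hn : n ≠ 0) :
    ∃ κ, dabsInv nk n = nk κ ∧ nk κ ∣ n :=
  Nat.sSup_mem (s := {d | ∃ k, d = nk k ∧ nk k ∣ n}) ⟨1, 0, h0.symm, h0 ▸ one_dvd n⟩
    (bddAbove_setOf_seq_dvd nk hn)

noncomputable def dvdSum (nk : ℕ → ℕ) (n : ℕ) : ℕ := ∑ k ∈ range (Mfun nk n + 1) with nk k ∣ n, nk k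

namespace IsPseudoAbsValueSeq

variable {nk : ℕ → ℕ} (hD : IsPseudoAbsValueSeq nk)
include hD

theorem pos (k : ℕ) : 0 < nk k :=
  (hD.zero ▸ Nat.one_pos : 0 < nk 0).trans_le (hD.strictMono.monotone k.zero_le)

theorem two_mul_le (k : ℕ) : 2 * nk k ≤ nk (k + 1) :=
  two_mul_le_of_dvd_of_lt (hD.dvd_succ k) (hD.strictMono k.lt_succ_self)

theorem le_Mfun_iff {n k : ℕ} (hn : 0 < n) : k ≤ Mfun nk n ↔ nk k ≤ n :=
  _root_.le_Mfun_iff hD.strictMono (hD.zero ▸ hn)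

theorem dabsInv_le_dvdSum {n : ℕ} (hn : n ≠ 0) : dabsInv nk n ≤ dvdSum nk n := by
  obtain ⟨κ, hκ, hκn⟩ := exists_dabsInv_eq hD.zero hn
  have hκM : κ ≤ Mfun nk n := (hD.le_Mfun_iff (Nat.pos_of_ne_zero hn)).2
    (Nat.le_of_dvd (Nat.pos_of_ne_zero hn) hκn)
  rw [hκ, dvdSum]
  exact single_le_sum (f := nk) (fun _ _ => Nat.zero_le _)
    (mem_filter.2 ⟨mem_range.2 (Nat.lt_succ_of_le hκM), hκn⟩)

theorem dvdSum_le_two_mul_dabsInv {n : ℕ} (hn : n ≠ 0) : dvdSum nk n ≤ 2 * dabsInv nk n := by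
  obtain ⟨κ, hκ, -⟩ := exists_dabsInv_eq hD.zero hn
  have hsub : {k ∈ range (Mfun nk n + 1) | nk k ∣ n} ⊆ range (κ + 1) := fun k hk =>
    mem_range.2 <| Nat.lt_succ_of_le <| hD.strictMono.le_iff_le.1 <|
      hκ ▸ le_dabsInv hn (mem_filter.1 hk).2
  rw [hκ]
  exact (sum_le_sum_of_subset hsub).trans (sum_range_succ_le_two_mul hD.two_mul_le κ)

theorem sum_mul_dvdSum (ψ : ℕ → ℝ) (N : ℕ) :
    ∑ n ∈ Icc 1 N, ψ n * dvdSum nk n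
      = ∑ k ∈ range (Mfun nk N + 1), nk k * ∑ m ∈ Icc 1 (N / nk k), ψ (m * nk k) := by
  calc ∑ n ∈ Icc 1 N, ψ n * dvdSum nk n
      = ∑ n ∈ Icc 1 N, ∑ k ∈ range (Mfun nk n + 1) with nk k ∣ n, (nk k : ℝ) * ψ n := by
        simp only [dvdSum, Nat.cast_sum, mul_sum, mul_comm]
    _ = ∑ k ∈ range (Mfun nk N + 1), ∑ n ∈ Icc 1 N with nk k ∣ n, (nk k : ℝ) * ψ n := by
        refine sum_comm' fun n k => ?_
        simp only [mem_Icc, mem_filter, mem_range, Nat.lt_succ_iff]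
        constructor
        · rintro ⟨⟨hn, hnN⟩, hk, hkn⟩
          exact ⟨⟨⟨hn, hnN⟩, hkn⟩,
            (hD.le_Mfun_iff (hn.trans hnN)).2 (((hD.le_Mfun_iff hn).1 hk).trans hnN)⟩
        · rintro ⟨⟨⟨hn, hnN⟩, hkn⟩, -⟩
          exact ⟨⟨hn, hnN⟩, (hD.le_Mfun_iff hn).2 (Nat.le_of_dvd hn hkn), hkn⟩
    _ = ∑ k ∈ range (Mfun nk N + 1), nk k * ∑ m ∈ Icc 1 (N / nk k), ψ (m * nk k) := by
        simp only [← mul_sum, sum_Icc_filter_dvd _ (hD.pos _)]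

theorem sum_Mfun_mul (ψ : ℕ → ℝ) (N : ℕ) :
    ∑ n ∈ Icc 1 N, (Mfun nk n : ℝ) * ψ n
      = ∑ k ∈ range (Mfun nk N), ∑ n ∈ Icc (nk (k + 1)) N, ψ n := by
  calc ∑ n ∈ Icc 1 N, (Mfun nk n : ℝ) * ψ n = ∑ n ∈ Icc 1 N, ∑ k ∈ range (Mfun nk n), ψ n := by
        simp only [sum_const, card_range, nsmul_eq_mul]
    _ = ∑ k ∈ range (Mfun nk N), ∑ n ∈ Icc (nk (k + 1)) N, ψ n := by
        refine sum_comm' fun n k => ?_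
        simp only [mem_Icc, mem_range, Nat.lt_iff_add_one_le]
        constructor
        · rintro ⟨⟨hn, hnN⟩, hk⟩
          have hkn := (hD.le_Mfun_iff hn).1 hk
          exact ⟨⟨hkn, hnN⟩, (hD.le_Mfun_iff (hn.trans hnN)).2 (hkn.trans hnN)⟩
        · rintro ⟨⟨hkn, hnN⟩, -⟩
          have hn : 0 < n := (hD.pos _).trans_le hkn
          exact ⟨⟨hn, hnN⟩, (hD.le_Mfun_iff hn).2 hkn⟩

section Estimates

variable {ψ : ℕ → ℝ} (hψ : Antitone ψ) (hψ0 : ∀ n, 0 ≤ ψ n)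
include hψ hψ0

theorem sum_Mfun_mul_le (N : ℕ) :
    ∑ n ∈ Icc 1 N, (Mfun nk n : ℝ) * ψ n ≤ 2 * ∑ n ∈ Icc 1 N, ψ n * dabsInv nk n := by
  set Φ : ℕ → ℝ := fun k => nk k * ∑ m ∈ Icc 1 (N / nk k), ψ (m * nk k)
  have hΦ0 : 0 ≤ Φ 0 := mul_nonneg (Nat.cast_nonneg _) (sum_nonneg fun m _ => hψ0 _)
  calc ∑ n ∈ Icc 1 N, (Mfun nk n : ℝ) * ψ n
      = ∑ k ∈ range (Mfun nk N), ∑ n ∈ Icc (nk (k + 1)) N, ψ n := hD.sum_Mfun_mul ψ N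
    _ ≤ ∑ k ∈ range (Mfun nk N), Φ (k + 1) := by
        gcongr with k
        exact hψ.sum_Icc_le_mul_sum_multiples hψ0 (hD.pos _) N
    _ ≤ ∑ k ∈ range (Mfun nk N + 1), Φ k := by rw [sum_range_succ']; linarith
    _ = ∑ n ∈ Icc 1 N, ψ n * dvdSum nk n := (hD.sum_mul_dvdSum ψ N).symm
    _ ≤ ∑ n ∈ Icc 1 N, ψ n * (2 * dabsInv nk n) := by
        gcongr with n hn
        · exact hψ0 n
        · exact_mod_cast hD.dvdSum_le_two_mul_dabsInv (Nat.one_le_iff_ne_zero.1 (mem_Icc.1 hn).1)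
    _ = 2 * ∑ n ∈ Icc 1 N, ψ n * dabsInv nk n := by
        rw [mul_sum]
        exact sum_congr rfl fun n _ => by ring

omit hψ in
theorem sum_le_sum_range_add_sum_Mfun_mul (N : ℕ) :
    ∑ n ∈ Icc 1 N, ψ n ≤ ∑ n ∈ range (nk 1), ψ n + ∑ n ∈ Icc 1 N, (Mfun nk n : ℝ) * ψ n := by
  rw [← sum_filter_add_sum_filter_not (Icc 1 N) (· < nk 1)]
  gcongr ?_ + ?_
  · refine sum_le_sum_of_subset_of_nonneg (fun n hn => ?_) fun n _ _ => hψ0 n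
    simp only [mem_filter, mem_range] at hn ⊢
    exact hn.2
  · calc ∑ n ∈ Icc 1 N with ¬n < nk 1, ψ n
        ≤ ∑ n ∈ Icc 1 N with ¬n < nk 1, (Mfun nk n : ℝ) * ψ n := by
          refine sum_le_sum fun n hn => le_mul_of_one_le_left (hψ0 n) ?_
          simp only [mem_filter, mem_Icc, not_lt] at hn
          exact_mod_cast (hD.le_Mfun_iff hn.1.1).2 hn.2
      _ ≤ ∑ n ∈ Icc 1 N, (Mfun nk n : ℝ) * ψ n :=
          sum_le_sum_of_subset_of_nonneg (filter_subset _ _) fun n _ _ =>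
            mul_nonneg (Nat.cast_nonneg _) (hψ0 n)

theorem sum_mul_dabsInv_le (N : ℕ) :
    ∑ n ∈ Icc 1 N, ψ n * dabsInv nk n
      ≤ 3 * ∑ n ∈ Icc 1 N, ψ n + ∑ n ∈ Icc 1 N, (Mfun nk n : ℝ) * ψ n := by
  rcases N.eq_zero_or_pos with rfl | hN
  · simp
  have hgaps : ∑ k ∈ range (Mfun nk N), nk (k + 1) * ψ (nk (k + 1)) ≤ 2 * ∑ n ∈ Icc 1 N, ψ n := by
    refine (sum_range_mul_le_two_mul_sum_Ioc hD.two_mul_le hψ hψ0 _).trans ?_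
    have hK : nk (Mfun nk N) ≤ N := (hD.le_Mfun_iff hN).1 le_rfl
    gcongr
    · exact fun n _ _ => hψ0 n
    · intro n hn
      simp only [mem_Ioc, mem_Icc, hD.zero] at hn ⊢
      omega
  calc ∑ n ∈ Icc 1 N, ψ n * dabsInv nk n ≤ ∑ n ∈ Icc 1 N, ψ n * dvdSum nk n := by
        gcongr with n hn
        · exact hψ0 n
        · exact_mod_cast hD.dabsInv_le_dvdSum (Nat.one_le_iff_ne_zero.1 (mem_Icc.1 hn).1)
    _ = ∑ k ∈ range (Mfun nk N + 1), nk k * ∑ m ∈ Icc 1 (N / nk k), ψ (m * nk k) :=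
        hD.sum_mul_dvdSum ψ N
    _ = ∑ k ∈ range (Mfun nk N), nk (k + 1) * ∑ m ∈ Icc 1 (N / nk (k + 1)), ψ (m * nk (k + 1))
          + ∑ n ∈ Icc 1 N, ψ n := by
        simp [sum_range_succ', hD.zero]
    _ ≤ ∑ k ∈ range (Mfun nk N), (nk (k + 1) * ψ (nk (k + 1)) + ∑ n ∈ Icc (nk (k + 1)) N, ψ n)
          + ∑ n ∈ Icc 1 N, ψ n := by
        gcongr with k
        exact hψ.mul_sum_multiples_le hψ0 _ N
    _ ≤ 3 * ∑ n ∈ Icc 1 N, ψ n + ∑ n ∈ Icc 1 N, (Mfun nk n : ℝ) * ψ n := by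
        rw [sum_add_distrib, ← hD.sum_Mfun_mul ψ N]
        linarith

end Estimates

end IsPseudoAbsValueSeq

theorem AddCircle.volume_setOf_norm_nsmul_le {T : ℝ} [Fact (0 < T)] {n : ℕ} (hn : n ≠ 0) (c : ℝ) :
    volume {α : AddCircle T | ‖n • α‖ ≤ c} = ENNReal.ofReal (min T (2 * c)) := by
  have hpre : {α : AddCircle T | ‖n • α‖ ≤ c}
      = (fun α => (n : ℤ) • α) ⁻¹' Metric.closedBall 0 c := by
    ext α
    simp [dist_eq_norm, natCast_zsmul]
  rw [hpre, (Measure.measurePreserving_zsmul volume (Int.natCast_ne_zero.2 hn)).measure_preimage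
    measurableSet_closedBall.nullMeasurableSet, AddCircle.volume_closedBall]

theorem forall_exists_le_of_le_add_mul {ι : Type*} {F G : ι → ℝ} {c K : ℝ} (hK : 0 < K)
    (hFG : ∀ N, F N ≤ c + K * G N) (hF : ∀ C, ∃ N, C ≤ F N) : ∀ C, ∃ N, C ≤ G N := fun C =>
  let ⟨N, hN⟩ := hF (c + K * C)
  ⟨N, le_of_mul_le_mul_left (by linarith [hFG N]) hK⟩

theorem Summable.of_summable_min_one {ι : Type*} {x : ι → ℝ}
    (hx : Summable fun i => min 1 (x i)) : Summable x := by
  refine hx.congr_cofinite ?_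
  filter_upwards [hx.tendsto_cofinite_zero.eventually (gt_mem_nhds one_pos)] with i hi
  exact min_eq_right (min_lt_iff.1 hi |>.resolve_left (lt_irrefl 1)).le

theorem forall_exists_le_sum_Icc_min_one {x : ℕ → ℝ} (hx : ∀ n, 0 ≤ x n)
    (h : ∀ C, ∃ N, C ≤ ∑ n ∈ Icc 1 N, x n) : ∀ C, ∃ N, C ≤ ∑ n ∈ Icc 1 N, min 1 (x n) := by
  simp only [sum_Icc_one_eq_sum_range] at h ⊢
  by_contra! hbdd
  obtain ⟨C, hC⟩ := hbdd
  have hsum : Summable fun n => x (n + 1) :=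
    (summable_of_sum_range_le (fun n => le_min zero_le_one (hx _)) fun N =>
      (hC N).le).of_summable_min_one
  obtain ⟨N, hN⟩ := h (∑' n, x (n + 1) + 1)
  linarith [hsum.sum_le_tsum (range N) fun n _ => hx (n + 1)]

/-- For a pseudo-absolute value sequence `𝒟` and a non-negative decreasing `ψ`,
`∑ λ(A_n) = ∞ ⟺ ∑ ℳ(n)ψ(n) = ∞`, where
`A_n = {α ∈ ℝ/ℤ : ‖nα‖ ≤ ψ(n)/|n|_𝒟}` and `λ` is Haar (Lebesgue) probability
measure on `ℝ/ℤ`. Divergence of a series of non-negative terms is expressed by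
unboundedness of its partial sums. -/
theorem measure_sum_div_iff (nk : ℕ → ℕ) (h0 : nk 0 = 1) (hmono : StrictMono nk)
    (hdvd : ∀ k, nk k ∣ nk (k + 1)) (ψ : ℕ → ℝ) (hψ0 : ∀ n, 0 ≤ ψ n) (hψ : Antitone ψ) :
    ((∀ C : ℝ, ∃ N : ℕ, C ≤ ∑ n ∈ Finset.Icc 1 N,
        (volume {α : UnitAddCircle | ‖n • α‖ ≤ ψ n * dabsInv nk n}).toReal) ↔
     (∀ C : ℝ, ∃ N : ℕ, C ≤ ∑ n ∈ Finset.Icc 1 N, (Mfun nk n : ℝ) * ψ n)) := by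
  have hD : IsPseudoAbsValueSeq nk := ⟨h0, hmono, hdvd⟩
  have hvol (N : ℕ) : ∑ n ∈ Icc 1 N,
      (volume {α : UnitAddCircle | ‖n • α‖ ≤ ψ n * dabsInv nk n}).toReal
        = ∑ n ∈ Icc 1 N, min 1 (2 * (ψ n * dabsInv nk n)) := by
    refine sum_congr rfl fun n hn => ?_
    rw [AddCircle.volume_setOf_norm_nsmul_le (Nat.one_le_iff_ne_zero.1 (mem_Icc.1 hn).1),
      ENNReal.toReal_ofReal (le_min zero_le_one (by have := hψ0 n; positivity))]
  simp only [hvol]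
  constructor
  · refine forall_exists_le_of_le_add_mul (c := 6 * ∑ n ∈ range (nk 1), ψ n) (K := 8)
      (by norm_num) fun N => ?_
    have hmin : ∑ n ∈ Icc 1 N, min 1 (2 * (ψ n * dabsInv nk n))
        ≤ 2 * ∑ n ∈ Icc 1 N, ψ n * dabsInv nk n := by
      rw [mul_sum]
      exact sum_le_sum fun n _ => min_le_right _ _
    linarith [hD.sum_mul_dabsInv_le hψ hψ0 N, hD.sum_le_sum_range_add_sum_Mfun_mul hψ0 N]
  · refine fun h => forall_exists_le_sum_Icc_min_one (fun n => by have := hψ0 n; positivity)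
      (forall_exists_le_of_le_add_mul (c := 0) (K := 1) one_pos (fun N => ?_) h)
    rw [← mul_sum]
    linarith [hD.sum_Mfun_mul_le hψ hψ0 N]
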